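/- Let P₁ and P₂ be independent random variables on a probability space, each uniformly distributed on the interval (0,1), and let w₁, w₂ be positive real constants with w₁² + w₂² = 1. Then the combined p-value P = Φ̄(w₁·z(P₁) + w₂·z(P₂)) is uniformly distributed on (0,1). -/

import Mathlib

open MeasureTheory ProbabilityTheory Set

/-- The cumulative distribution function `Φ` of the standard Gaussian measure on `ℝ`. -/
noncomputable def stdGaussCDF (x : ℝ) : ℝ := ((gaussianReal 0 1) (Set.Iic x)).toReal

/-- The survival function `Φ̄ = 1 - Φ` of the standard Gaussian measure. -/
noncomputable def stdGaussSurv (x : ℝ) : ℝ := 1 - stdGaussCDF x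

/-- `z(u) = Φ̄⁻¹(u)`, the inverse of the standard Gaussian survival function. -/
noncomputable def zval : ℝ → ℝ := Function.invFun stdGaussSurv

/-- The uniform distribution on `(0,1)`: Lebesgue measure restricted to `(0,1)`. -/
noncomputable def unif01 : Measure ℝ := volume.restrict (Set.Ioo (0 : ℝ) 1)

/-!
`Φ̄` is a continuous strictly decreasing bijection from `ℝ` onto `(0,1)`, because the Gaussian
measure charges no point and every interval. Hence `z(U)` is standard Gaussian for `U` uniform on
`(0,1)` (inverse transform sampling) and, since `Φ̄ ∘ z = id` on `(0,1)`, `Φ̄(Z)` is uniform for `Z`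
standard Gaussian. So `z(P₁)`, `z(P₂)` are independent standard Gaussians, `w₁ z(P₁) + w₂ z(P₂)` is
Gaussian with variance `w₁² + w₂² = 1`, and its image under `Φ̄` is uniform.
-/

namespace ProbabilityTheory

lemma continuous_cdf (μ : Measure ℝ) [IsProbabilityMeasure μ] [NullSingletonClass μ] :
    Continuous (cdf μ) := by
  refine continuous_iff_continuousAt.2 fun x ↦ continuousAt_iff_continuous_left_right.2
    ⟨?_, (cdf μ).right_continuous x⟩
  rw [continuousWithinAt_Iio_iff_Iic.symm, (monotone_cdf μ).continuousWithinAt_Iio_iff_leftLim_eq]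
  have h := (cdf μ).measure_singleton x
  rw [measure_cdf, measure_singleton, eq_comm, ENNReal.ofReal_eq_zero, sub_nonpos] at h
  exact le_antisymm ((monotone_cdf μ).leftLim_le le_rfl) h

lemma strictMono_cdf (μ : Measure ℝ) [IsProbabilityMeasure μ] (h : volume ≪ μ) :
    StrictMono (cdf μ) := by
  intro a b hab
  have hpos : μ (Ioc a b) ≠ 0 := fun h0 ↦ hab.not_ge (by simpa using h h0)
  rw [← measure_cdf μ, StieltjesFunction.measure_Ioc, ne_eq, ENNReal.ofReal_eq_zero,
    not_le, sub_pos] at hpos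
  exact hpos

lemma IndepFun.hasLaw_mul_add_mul_gaussianReal {Ω : Type*}
    {mΩ : MeasurableSpace Ω} {P : Measure Ω} {X Y : Ω → ℝ} (hXY : IndepFun X Y P)
    (hX : HasLaw X (gaussianReal 0 1) P) (hY : HasLaw Y (gaussianReal 0 1) P) {a b : ℝ}
    (hab : a ^ 2 + b ^ 2 = 1) :
    HasLaw (fun ω ↦ a * X ω + b * Y ω) (gaussianReal 0 1) P where
  map_eq := by
    have h := gaussianReal_add_gaussianReal_of_indepFun
      (hXY.comp (measurable_const_mul a) (measurable_const_mul b))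
      (gaussianReal_const_mul hX a).map_eq (gaussianReal_const_mul hY b).map_eq
    convert h using 2
    · rfl
    · simp
    · ext; simp [hab]

end ProbabilityTheory

lemma stdGaussCDF_eq_cdf : stdGaussCDF = cdf (gaussianReal 0 1) :=
  funext fun x ↦ (cdf_eq_real _ x).symm

lemma continuous_stdGaussSurv : Continuous stdGaussSurv := by
  have := nullSingletonClass_gaussianReal (μ := 0) one_ne_zero
  exact continuous_const.sub (stdGaussCDF_eq_cdf ▸ continuous_cdf _)

lemma strictAnti_stdGaussSurv : StrictAnti stdGaussSurv := fun _ _ hab ↦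
  sub_lt_sub_left (stdGaussCDF_eq_cdf ▸
    strictMono_cdf _ (gaussianReal_absolutelyContinuous' 0 one_ne_zero) hab) 1

lemma stdGaussSurv_pos (x : ℝ) : 0 < stdGaussSurv x :=
  (sub_nonneg.2 (stdGaussCDF_eq_cdf ▸ cdf_le_one _ (x + 1))).trans_lt
    (strictAnti_stdGaussSurv (lt_add_one x))

lemma mem_range_stdGaussSurv {u : ℝ} (hu : u ∈ Ioo (0 : ℝ) 1) : u ∈ range stdGaussSurv := by
  refine mem_range_of_exists_le_of_exists_ge continuous_stdGaussSurv ?_ ?_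
  · obtain ⟨x, hx⟩ := ((tendsto_cdf_atTop (gaussianReal 0 1)).eventually_const_lt
      (sub_lt_self 1 hu.1)).exists
    exact ⟨x, by rw [stdGaussSurv, stdGaussCDF_eq_cdf]; linarith⟩
  · obtain ⟨x, hx⟩ := ((tendsto_cdf_atBot (gaussianReal 0 1)).eventually_lt_const
      (sub_pos.2 hu.2)).exists
    exact ⟨x, by rw [stdGaussSurv, stdGaussCDF_eq_cdf]; linarith⟩

lemma stdGaussSurv_zval {u : ℝ} (hu : u ∈ Ioo (0 : ℝ) 1) : stdGaussSurv (zval u) = u :=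
  Function.invFun_eq (mem_range_stdGaussSurv hu)

lemma zval_le_iff {u x : ℝ} (hu : u ∈ Ioo (0 : ℝ) 1) : zval u ≤ x ↔ stdGaussSurv x ≤ u := by
  conv_rhs => rw [← stdGaussSurv_zval hu]
  exact strictAnti_stdGaussSurv.le_iff_ge.symm

lemma antitoneOn_zval : AntitoneOn zval (Ioo 0 1) := fun _ hu _ hv huv ↦
  (zval_le_iff hv).2 (by rwa [stdGaussSurv_zval hu])

instance : IsProbabilityMeasure unif01 := ⟨by simp [unif01]⟩

lemma aemeasurable_zval : AEMeasurable zval unif01 :=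
  aemeasurable_restrict_of_antitoneOn measurableSet_Ioo antitoneOn_zval

lemma hasLaw_zval : HasLaw zval (gaussianReal 0 1) unif01 where
  aemeasurable := aemeasurable_zval
  map_eq := by
    have := Measure.isProbabilityMeasure_map aemeasurable_zval
    refine Measure.ext_of_Iic _ _ fun x ↦ ?_
    have hset : zval ⁻¹' Iic x ∩ Ioo 0 1 = Ico (stdGaussSurv x) 1 := by
      ext u
      simp only [mem_inter_iff, mem_preimage, mem_Iic, mem_Ioo, mem_Ico]
      constructor
      · rintro ⟨h, hu⟩
        exact ⟨(zval_le_iff hu).1 h, hu.2⟩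
      · rintro ⟨h, hu⟩
        have hu' : u ∈ Ioo 0 1 := ⟨(stdGaussSurv_pos x).trans_le h, hu⟩
        exact ⟨(zval_le_iff hu').2 h, hu'⟩
    rw [Measure.map_apply_of_aemeasurable aemeasurable_zval measurableSet_Iic, unif01,
      Measure.restrict_apply' measurableSet_Ioo, hset, Real.volume_Ico, ← ofReal_cdf,
      ← stdGaussCDF_eq_cdf, stdGaussSurv, sub_sub_cancel]

lemma hasLaw_stdGaussSurv : HasLaw stdGaussSurv unif01 (gaussianReal 0 1) where
  aemeasurable := continuous_stdGaussSurv.aemeasurable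
  map_eq := by
    have hid : stdGaussSurv ∘ zval =ᵐ[unif01] id :=
      ae_restrict_of_forall_mem measurableSet_Ioo fun _ hu ↦ stdGaussSurv_zval hu
    rw [← hasLaw_zval.map_eq, AEMeasurable.map_map_of_aemeasurable
      (hasLaw_zval.map_eq ▸ continuous_stdGaussSurv.aemeasurable) hasLaw_zval.aemeasurable,
      Measure.map_congr hid, Measure.map_id]

theorem stmt1_general {Ω : Type*} [MeasurableSpace Ω] (μ : Measure Ω)
    (P₁ P₂ : Ω → ℝ) (hm₁ : Measurable P₁) (hm₂ : Measurable P₂)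
    (hu₁ : μ.map P₁ = unif01) (hu₂ : μ.map P₂ = unif01)
    (hind : IndepFun P₁ P₂ μ)
    (w₁ w₂ : ℝ) (hw : w₁ ^ 2 + w₂ ^ 2 = 1) :
    μ.map (fun ω => stdGaussSurv (w₁ * zval (P₁ ω) + w₂ * zval (P₂ ω))) = unif01 := by
  have hP₁ : HasLaw P₁ unif01 μ := ⟨hm₁.aemeasurable, hu₁⟩
  have hP₂ : HasLaw P₂ unif01 μ := ⟨hm₂.aemeasurable, hu₂⟩
  have hZ : IndepFun (zval ∘ P₁) (zval ∘ P₂) μ :=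
    hind.comp₀ hP₁.aemeasurable hP₂.aemeasurable (hu₁ ▸ aemeasurable_zval)
      (hu₂ ▸ aemeasurable_zval)
  exact (hasLaw_stdGaussSurv.comp
    (hZ.hasLaw_mul_add_mul_gaussianReal (hasLaw_zval.comp hP₁) (hasLaw_zval.comp hP₂) hw)).map_eq

theorem stmt1 {Ω : Type*} [MeasurableSpace Ω] (μ : Measure Ω) [IsProbabilityMeasure μ]
    (P₁ P₂ : Ω → ℝ) (hm₁ : Measurable P₁) (hm₂ : Measurable P₂)
    (hval₁ : ∀ ω, P₁ ω ∈ Set.Ioo (0 : ℝ) 1) (hval₂ : ∀ ω, P₂ ω ∈ Set.Ioo (0 : ℝ) 1)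
    (hu₁ : μ.map P₁ = unif01) (hu₂ : μ.map P₂ = unif01)
    (hind : IndepFun P₁ P₂ μ)
    (w₁ w₂ : ℝ) (hw₁ : 0 < w₁) (hw₂ : 0 < w₂) (hw : w₁ ^ 2 + w₂ ^ 2 = 1) :
    μ.map (fun ω => stdGaussSurv (w₁ * zval (P₁ ω) + w₂ * zval (P₂ ω))) = unif01 :=
  stmt1_general μ P₁ P₂ hm₁ hm₂ hu₁ hu₂ hind w₁ w₂ hw
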